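/- Let H be a finite simple graph with no isolatable vertex, let J₁ be a maximal independent set in H, and let J₂ be a maximal independent set in the induced subgraph H − J₁ (the subgraph of H induced by the vertices outside J₁). Then J₂ is also a maximal independent set in H itself. -/

import Mathlib

/-- A set of vertices is independent if no two of its vertices are adjacent. -/
def IsIndep {V : Type*} (G : SimpleGraph V) (s : Set V) : Prop :=
  ∀ ⦃u⦄, u ∈ s → ∀ ⦃v⦄, v ∈ s → ¬ G.Adj u v

/-- A maximal independent set: independent and contained in no strictly larger
independent set. -/
def MaxIndep {V : Type*} (G : SimpleGraph V) (s : Set V) : Prop :=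
  IsIndep G s ∧ ∀ t : Set V, IsIndep G t → s ⊆ t → s = t

/-- A maximal independent set of the subgraph induced on `A`. -/
def MaxIndepOn {V : Type*} (G : SimpleGraph V) (A : Set V) (s : Set V) : Prop :=
  s ⊆ A ∧ IsIndep G s ∧ ∀ t : Set V, t ⊆ A → IsIndep G t → s ⊆ t → s = t

/-- A graph is well-covered if every maximal independent set has the same cardinality. -/
def WellCovered {V : Type*} (G : SimpleGraph V) : Prop :=
  ∀ s t : Set V, MaxIndep G s → MaxIndep G t → s.ncard = t.ncard

/-- The closed neighborhood `N[S]`: the union of `S` with the set of all vertices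
adjacent to some vertex of `S`. -/
def ClosedNbhd {V : Type*} (G : SimpleGraph V) (S : Set V) : Set V :=
  S ∪ {v | ∃ u ∈ S, G.Adj u v}

/-- A vertex `x` is isolatable if there is an independent set `M` such that `x` is the
unique vertex lying outside `N[M]`. -/
def Isolatable {V : Type*} (G : SimpleGraph V) (x : V) : Prop :=
  ∃ M : Set V, IsIndep G M ∧ (ClosedNbhd G M)ᶜ = {x}

/-! The vertices outside `N[J₂]` lie in `J₁`, by maximality of `J₂` in `H − J₁`, so they form an
independent set `C`. If `v ∈ C`, then `J₂ ∪ (C \ {v})` is independent and `v` is the only vertex it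
fails to dominate, i.e. `v` is isolatable. Hence `N[J₂]` is everything, so `J₂` is maximal in `H`. -/

section

variable {V : Type*} {G : SimpleGraph V} {s t A : Set V} {u v : V}

theorem IsIndep.mono (ht : IsIndep G t) (hst : s ⊆ t) : IsIndep G s :=
  fun _ ha _ hb => ht (hst ha) (hst hb)

theorem IsIndep.insert (hs : IsIndep G s) (hu : ∀ w ∈ s, ¬ G.Adj u w) :
    IsIndep G (insert u s) := by
  rintro a (rfl | ha) b (rfl | hb)
  · exact G.irrefl
  · exact hu b hb
  · exact fun hab => hu a ha hab.symm
  · exact hs ha hb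

theorem IsIndep.union (hs : IsIndep G s) (ht : IsIndep G t)
    (hst : ∀ a ∈ s, ∀ b ∈ t, ¬ G.Adj a b) : IsIndep G (s ∪ t) := by
  rintro a (ha | ha) b (hb | hb)
  · exact hs ha hb
  · exact hst a ha b hb
  · exact fun hab => hst b hb a ha hab.symm
  · exact ht ha hb

theorem subset_closedNbhd : s ⊆ ClosedNbhd G s :=
  Set.subset_union_left

theorem closedNbhd_mono (hst : s ⊆ t) : ClosedNbhd G s ⊆ ClosedNbhd G t := by
  rintro x (hx | ⟨w, hw, hwx⟩)
  · exact Or.inl (hst hx)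
  · exact Or.inr ⟨w, hst hw, hwx⟩

theorem not_adj_of_notMem_closedNbhd (hu : u ∈ s) (hv : v ∉ ClosedNbhd G s) : ¬ G.Adj u v :=
  fun huv => hv (Or.inr ⟨u, hu, huv⟩)

theorem maxIndep_of_closedNbhd_eq_univ (hs : IsIndep G s) (hN : ClosedNbhd G s = Set.univ) :
    MaxIndep G s := by
  refine ⟨hs, fun t ht hst => hst.antisymm fun x hx => ?_⟩
  rcases hN.symm ▸ Set.mem_univ x with hxs | ⟨w, hw, hwx⟩
  · exact hxs
  · exact absurd hwx (ht (hst hw) hx)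

theorem MaxIndepOn.compl_closedNbhd_subset (h : MaxIndepOn G A s) :
    (ClosedNbhd G s)ᶜ ⊆ Aᶜ := by
  intro u hu huA
  have hins : IsIndep G (insert u s) :=
    h.2.1.insert fun w hw huw => not_adj_of_notMem_closedNbhd hw hu huw.symm
  have hsub : insert u s ⊆ A := Set.insert_subset huA h.1
  have heq := h.2.2 _ hsub hins (Set.subset_insert u s)
  exact hu (subset_closedNbhd (heq ▸ Set.mem_insert u s))

theorem isolatable_of_notMem_closedNbhd (hs : IsIndep G s) (hC : IsIndep G (ClosedNbhd G s)ᶜ)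
    (hv : v ∉ ClosedNbhd G s) : Isolatable G v := by
  set C := (ClosedNbhd G s)ᶜ
  have hvC : v ∈ C := hv
  refine ⟨s ∪ (C \ {v}), hs.union (hC.mono Set.sdiff_subset)
    fun a ha b hb => not_adj_of_notMem_closedNbhd ha hb.1, Set.ext fun x => ⟨fun hx => ?_, ?_⟩⟩
  · by_contra hxv
    have hxN : x ∈ ClosedNbhd G s := by
      by_contra hxC
      exact hx (subset_closedNbhd (Or.inr ⟨hxC, hxv⟩))
    exact hx (closedNbhd_mono Set.subset_union_left hxN)
  · rintro rfl ((hvs | ⟨-, hvv⟩) | ⟨w, hw | hw, hwv⟩)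
    · exact hv (subset_closedNbhd hvs)
    · exact hvv rfl
    · exact not_adj_of_notMem_closedNbhd hw hv hwv
    · exact hC hw.1 hvC hwv

end

theorem stmt_7_general {V : Type*} (H : SimpleGraph V)
    (hno : ∀ x : V, ¬ Isolatable H x)
    (J₁ J₂ : Set V) (h₁ : MaxIndep H J₁) (h₂ : MaxIndepOn H J₁ᶜ J₂) :
    MaxIndep H J₂ := by
  have hC : (ClosedNbhd H J₂)ᶜ ⊆ J₁ := by
    simpa only [compl_compl] using h₂.compl_closedNbhd_subset
  refine maxIndep_of_closedNbhd_eq_univ h₂.2.1 (Set.eq_univ_of_forall fun x => ?_)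
  by_contra hx
  exact hno x (isolatable_of_notMem_closedNbhd h₂.2.1 (h₁.1.mono hC) hx)

/-- If `H` has no isolatable vertex, `J₁` is a maximal independent set in `H` and `J₂`
is a maximal independent set of the subgraph induced by the vertices outside `J₁`,
then `J₂` is a maximal independent set of `H` itself. -/
theorem stmt_7 {V : Type*} [Fintype V] (H : SimpleGraph V)
    (hno : ∀ x : V, ¬ Isolatable H x)
    (J₁ J₂ : Set V) (h₁ : MaxIndep H J₁) (h₂ : MaxIndepOn H J₁ᶜ J₂) :
    MaxIndep H J₂ :=
  stmt_7_general H hno J₁ J₂ h₁ h₂
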